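/- (Squeeze lemma, Lemma 1 of the paper.) Let 0 < t < y and suppose μ̂ ∈ ℝ satisfies E₁(μ̂, t) = y (i.e. μ̂ is a maximum conditional-likelihood estimate, solving y = μ̂ + (φ(t−μ̂) − φ(−t−μ̂))/Z₁(μ̂,t)). Then y − t ≤ μ̂ ≤ y. In other words, the truncated Gaussian estimator is squeezed between the soft-thresholding value y − t and the hard-thresholding value y. -/

import Mathlib

/-!
Write `Δ = φ(t - μ) - φ(t + μ)`. Integrating `x φ(x - μ)` over the complement of `(-t, t)`
gives `E₁(μ, t) = μ + Δ / Z₁(μ, t)`, and `Δ` has the sign of `μ`. Since `y > 0`, this forces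
`μ̂ ≥ 0`, hence `Δ ≥ 0` and `μ̂ ≤ y`. For `y - t ≤ μ̂` one needs `Δ ≤ t Z₁`, where
`Δ = ∫_{t-μ}^{t+μ} s φ(s) ds`. If `μ ≤ t`, then `φ` decreases on `[t - μ, t + μ]`, so the
`φ`-weighted mean of `s` there is at most the midpoint `t`. If `μ > t`, then
`Δ = φ(μ - t) - φ(μ + t) ≤ 2t · max (s φ(s)) ≤ t / 2`, while `Z₁ ≥ Φ(μ - t) ≥ 1 / 2`.
-/

open MeasureTheory

/-- Standard Gaussian density `φ(x) = (2π)^{-1/2} exp(-x²/2)`. -/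
noncomputable def gpdf (x : ℝ) : ℝ := (Real.sqrt (2 * Real.pi))⁻¹ * Real.exp (-x ^ 2 / 2)

/-- Standard Gaussian CDF `Φ(x)`. -/
noncomputable def gcdf (x : ℝ) : ℝ := ∫ t in Set.Iic x, gpdf t

/-- Normalizing constant `Z₁(μ,t) = 1 - Φ(t-μ) + Φ(-t-μ)`. -/
noncomputable def Z1 (μ t : ℝ) : ℝ := 1 - gcdf (t - μ) + gcdf (-t - μ)

/-- Mean of `N(μ,1)` conditioned on the two-sided tail `(-∞,-t] ∪ [t,∞)`. -/
noncomputable def E1 (μ t : ℝ) : ℝ :=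
  (Z1 μ t)⁻¹ * ∫ x in {x : ℝ | t ≤ |x|}, x * gpdf (x - μ)

open Real Set ProbabilityTheory intervalIntegral

-- Pairing `x` with `a + b - x` leaves `(x - (a + b) / 2) (f x - f (a + b - x)) ≤ 0`.
theorem AntitoneOn.integral_mul_le_midpoint_mul_integral {f : ℝ → ℝ} {a b : ℝ} (hab : a ≤ b)
    (hf : AntitoneOn f (Icc a b)) :
    ∫ x in a..b, x * f x ≤ (a + b) / 2 * ∫ x in a..b, f x := by
  set g : ℝ → ℝ := fun x => (x - (a + b) / 2) * f x
  have hfi : IntervalIntegrable f volume a b := (uIcc_of_le hab ▸ hf).intervalIntegrable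
  have hgi : IntervalIntegrable g volume a b := hfi.continuousOn_mul (by fun_prop)
  have hgi' : IntervalIntegrable (fun x => g (a + b - x)) volume a b := by
    simpa using (hgi.comp_sub_left (a + b)).symm
  have hreflect : ∫ x in a..b, g (a + b - x) = ∫ x in a..b, g x := by
    simp [integral_comp_sub_left]
  have hpair : ∀ x ∈ Icc a b, g x + g (a + b - x) ≤ 0 := by
    intro x hx
    have hx' : a + b - x ∈ Icc a b := ⟨by linarith [hx.2], by linarith [hx.1]⟩
    rcases le_total x ((a + b) / 2) with h | h
    · have := hf hx hx' (by linarith)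
      simp only [g]; nlinarith
    · have := hf hx' hx (by linarith)
      simp only [g]; nlinarith
  have hg : ∫ x in a..b, g x ≤ 0 := by
    have := integral_mono_on hab (hgi.add hgi') intervalIntegrable_const hpair
    rw [integral_add hgi hgi', hreflect] at this
    simpa only [intervalIntegral.integral_zero, add_self_nonpos_iff] using this
  have hsplit : ∫ x in a..b, x * f x = ∫ x in a..b, g x + (a + b) / 2 * f x :=
    integral_congr fun x _ => by simp only [g]; ring
  rw [hsplit, integral_add hgi (hfi.const_mul _), intervalIntegral.integral_const_mul]
  linarith

lemma gpdf_pos (x : ℝ) : 0 < gpdf x := by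
  unfold gpdf; positivity

lemma gpdf_neg (x : ℝ) : gpdf (-x) = gpdf x := by
  simp [gpdf]

lemma gpdf_le_gpdf_of_abs_le {x y : ℝ} (h : |x| ≤ |y|) : gpdf y ≤ gpdf x := by
  unfold gpdf
  gcongr _ * exp (-?_ / 2)
  exact sq_le_sq.2 h

lemma antitoneOn_gpdf : AntitoneOn gpdf (Ici 0) := fun x hx y hy hxy =>
  gpdf_le_gpdf_of_abs_le (by rwa [abs_of_nonneg hx, abs_of_nonneg (le_trans hx hxy)])

lemma gpdf_add_le_gpdf_sub {t μ : ℝ} (ht : 0 ≤ t) (hμ : 0 ≤ μ) :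
    gpdf (t + μ) ≤ gpdf (t - μ) := by
  refine gpdf_le_gpdf_of_abs_le ?_
  rw [abs_of_nonneg (by linarith : 0 ≤ t + μ)]
  exact abs_sub_le_iff.2 ⟨by linarith, by linarith⟩

lemma continuous_gpdf : Continuous gpdf := by
  unfold gpdf; fun_prop

lemma hasDerivAt_gpdf (x : ℝ) : HasDerivAt gpdf (-(x * gpdf x)) x := by
  have := (((hasDerivAt_pow 2 x).neg.div_const 2).exp).const_mul (√(2 * π))⁻¹
  refine this.congr_deriv ?_
  simp only [gpdf, Pi.neg_apply]; ring

lemma mul_gpdf_le (x : ℝ) : x * gpdf x ≤ 1 / 4 := by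
  have hsq : (x * gpdf x) ^ 2 = x ^ 2 * exp (-x ^ 2) / (2 * π) := by
    simp only [gpdf, mul_pow, inv_pow, sq_sqrt (by positivity : (0 : ℝ) ≤ 2 * π), ← exp_nat_mul]
    field_simp
    ring_nf
  have hexp : x ^ 2 * exp (-x ^ 2) ≤ exp (-1) := by
    calc x ^ 2 * exp (-x ^ 2) ≤ exp (x ^ 2 - 1) * exp (-x ^ 2) := by
          gcongr; linarith [add_one_le_exp (x ^ 2 - 1)]
      _ = exp (-1) := by rw [← exp_add]; ring_nf
  -- `e⁻¹ / (2π) ≤ 1/16` because `e π > 8`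
  have he : exp (-1) * 2.7 ≤ 1 := by
    rw [exp_neg]
    exact (inv_mul_le_one₀ (exp_pos 1)).2 (lt_trans (by norm_num) exp_one_gt_d9).le
  have hbound : (x * gpdf x) ^ 2 ≤ (1 / 4) ^ 2 := by
    rw [hsq, div_le_iff₀ (by positivity)]
    nlinarith [pi_gt_three, exp_pos (-1)]
  exact le_of_sq_le_sq hbound (by norm_num)

lemma gaussianPDFReal_one_eq_gpdf_sub (μ x : ℝ) : gaussianPDFReal μ 1 x = gpdf (x - μ) := by
  simp [gaussianPDFReal, gpdf]

lemma gaussianPDFReal_zero_one_eq_gpdf : gaussianPDFReal 0 1 = gpdf := by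
  ext x; simp [gaussianPDFReal_one_eq_gpdf_sub]

lemma integrable_gpdf : Integrable gpdf :=
  gaussianPDFReal_zero_one_eq_gpdf ▸ integrable_gaussianPDFReal 0 1

lemma integral_gpdf : ∫ x, gpdf x = 1 :=
  gaussianPDFReal_zero_one_eq_gpdf ▸ integral_gaussianPDFReal_eq_one 0 one_ne_zero

lemma integral_mul_gpdf_sub (μ : ℝ) : ∫ x, x * gpdf (x - μ) = μ := by
  simpa [gaussianPDFReal_one_eq_gpdf_sub, integral_gaussianReal_eq_integral_smul, mul_comm] using
    integral_id_gaussianReal (μ := μ) (v := 1)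

lemma integrable_mul_gpdf_sub (μ : ℝ) : Integrable fun x => x * gpdf (x - μ) := by
  have := (memLp_id_gaussianReal (μ := μ) (v := 1) 1).integrable le_rfl
  rw [gaussianReal_of_var_ne_zero _ one_ne_zero,
    integrable_withDensity_iff_integrable_smul' (measurable_gaussianPDF _ _)
      (ae_of_all _ fun _ => gaussianPDF_lt_top)] at this
  simpa [gaussianPDFReal_one_eq_gpdf_sub, mul_comm] using this

lemma integral_mul_gpdf (a b : ℝ) : ∫ x in a..b, x * gpdf x = gpdf a - gpdf b := by
  rw [integral_eq_sub_of_hasDerivAt (f := fun x => -gpdf x)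
    (fun x _ => (hasDerivAt_gpdf x).neg.congr_deriv (neg_neg _))
    ((continuous_id.mul continuous_gpdf).intervalIntegrable a b)]
  ring

lemma gpdf_sub_gpdf_le {a b : ℝ} (hab : a ≤ b) : gpdf a - gpdf b ≤ (b - a) / 4 := by
  rw [← integral_mul_gpdf]
  calc ∫ x in a..b, x * gpdf x ≤ ∫ _ in a..b, (1 / 4 : ℝ) :=
        integral_mono_on hab ((continuous_id.mul continuous_gpdf).intervalIntegrable a b)
          intervalIntegrable_const fun x _ => mul_gpdf_le x
    _ = (b - a) / 4 := by rw [intervalIntegral.integral_const, smul_eq_mul]; ring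

lemma gcdf_sub_gcdf (a b : ℝ) : gcdf b - gcdf a = ∫ x in a..b, gpdf x :=
  integral_Iic_sub_Iic integrable_gpdf.integrableOn integrable_gpdf.integrableOn

lemma gcdf_pos (x : ℝ) : 0 < gcdf x := by
  refine (setIntegral_pos_iff_support_of_nonneg_ae (ae_of_all _ fun y => (gpdf_pos y).le)
    integrable_gpdf.integrableOn).2 ?_
  simp [Function.support, (gpdf_pos _).ne']

lemma gcdf_neg (x : ℝ) : gcdf (-x) = 1 - gcdf x := by
  have hsplit := integral_add_compl (measurableSet_Iic (a := x)) integrable_gpdf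
  rw [compl_Iic, integral_gpdf] at hsplit
  rw [gcdf, ← integral_comp_neg_Ioi]
  simp only [gpdf_neg]
  rw [gcdf]
  linarith

lemma gcdf_zero : gcdf 0 = 1 / 2 := by
  linarith [neg_zero (G := ℝ) ▸ gcdf_neg 0]

lemma monotone_gcdf : Monotone gcdf := fun a b hab => by
  rw [← sub_nonneg, gcdf_sub_gcdf]
  exact integral_nonneg hab fun x _ => (gpdf_pos x).le

lemma Z1_eq_gcdf_add_gcdf (μ t : ℝ) : Z1 μ t = gcdf (μ - t) + gcdf (-t - μ) := by
  rw [Z1, ← neg_sub t μ, gcdf_neg]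

lemma Z1_pos (μ t : ℝ) : 0 < Z1 μ t := by
  rw [Z1_eq_gcdf_add_gcdf]; linarith [gcdf_pos (μ - t), gcdf_pos (-t - μ)]

lemma setIntegral_tail_mul_gpdf_sub (μ : ℝ) {t : ℝ} (ht : 0 ≤ t) :
    ∫ x in {x : ℝ | t ≤ |x|}, x * gpdf (x - μ) = μ * Z1 μ t + gpdf (t - μ) - gpdf (t + μ) := by
  have hcompl : {x : ℝ | t ≤ |x|} = (Ioo (-t) t)ᶜ := by
    ext x; simp only [mem_ofPred_eq, mem_compl_iff, mem_Ioo, ← abs_lt, not_lt]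
  have hcentral : ∫ x in Ioo (-t) t, x * gpdf (x - μ)
      = gpdf (-t - μ) - gpdf (t - μ) + μ * (gcdf (t - μ) - gcdf (-t - μ)) := by
    rw [← integral_Ioc_eq_integral_Ioo, ← integral_of_le (by linarith)]
    have hshift : ∀ x, x * gpdf (x - μ) = (x - μ) * gpdf (x - μ) + μ * gpdf (x - μ) :=
      fun x => by ring
    have hcont : Continuous fun x => x * gpdf x := continuous_id.mul continuous_gpdf
    simp_rw [hshift]
    rw [integral_comp_sub_right (fun x => x * gpdf x + μ * gpdf x),
      integral_add (hcont.intervalIntegrable _ _)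
        ((continuous_gpdf.const_mul μ).intervalIntegrable _ _),
      intervalIntegral.integral_const_mul, integral_mul_gpdf, ← gcdf_sub_gcdf]
  rw [hcompl, setIntegral_compl measurableSet_Ioo (integrable_mul_gpdf_sub μ),
    integral_mul_gpdf_sub, hcentral, Z1, ← gpdf_neg (t + μ)]
  ring_nf

lemma E1_eq {μ t : ℝ} (ht : 0 ≤ t) :
    E1 μ t = μ + (gpdf (t - μ) - gpdf (t + μ)) / Z1 μ t := by
  rw [E1, setIntegral_tail_mul_gpdf_sub μ ht]
  field_simp [(Z1_pos μ t).ne']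
  ring

lemma gpdf_sub_sub_gpdf_add_le_mul_Z1 {μ t : ℝ} (hμ : 0 ≤ μ) (ht : 0 ≤ t) :
    gpdf (t - μ) - gpdf (t + μ) ≤ t * Z1 μ t := by
  rw [Z1_eq_gcdf_add_gcdf]
  have hpos := gcdf_pos (-t - μ)
  rcases le_or_gt μ t with hμt | htμ
  · have hmid := (antitoneOn_gpdf.mono (Icc_subset_Ici_self.trans (Ici_subset_Ici.2
        (by linarith : 0 ≤ t - μ)))).integral_mul_le_midpoint_mul_integral
        (by linarith : t - μ ≤ t + μ)
    have hright : gcdf (t + μ) = 1 - gcdf (-t - μ) := by rw [← gcdf_neg]; congr 1; ring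
    have hleft : gcdf (t - μ) = 1 - gcdf (μ - t) := by rw [← gcdf_neg, neg_sub]
    rw [integral_mul_gpdf, ← gcdf_sub_gcdf, hright, hleft] at hmid
    nlinarith
  · have hquarter := gpdf_sub_gpdf_le (by linarith : μ - t ≤ μ + t)
    have hhalf : 1 / 2 ≤ gcdf (μ - t) := gcdf_zero ▸ monotone_gcdf (by linarith)
    rw [← gpdf_neg (t - μ), neg_sub, add_comm t μ]
    nlinarith

/-- Squeeze lemma (Lemma 1 of the paper): for `0 < t < y`, any solution `μ̂` of the
maximum conditional-likelihood equation `E₁(μ̂,t) = y` satisfies `y - t ≤ μ̂ ≤ y`;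
i.e. the truncated Gaussian estimator is squeezed between the soft-thresholding
value `y - t` and the hard-thresholding value `y`. -/
theorem truncGauss_estimator_squeeze (t y μhat : ℝ) (ht : 0 < t) (hty : t < y)
    (hsol : E1 μhat t = y) :
    y - t ≤ μhat ∧ μhat ≤ y := by
  rw [E1_eq ht.le] at hsol
  have hZ := Z1_pos μhat t
  have hμ : 0 ≤ μhat := by
    by_contra! hneg
    have hdiff : gpdf (t - μhat) - gpdf (t + μhat) ≤ 0 := by
      have := gpdf_add_le_gpdf_sub ht.le (neg_nonneg.2 hneg.le)
      rw [← sub_eq_add_neg, sub_neg_eq_add] at this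
      linarith
    linarith [div_nonpos_of_nonpos_of_nonneg hdiff hZ.le]
  have hdiff_nonneg := sub_nonneg.2 (gpdf_add_le_gpdf_sub ht.le hμ)
  have hdiff_le := (div_le_iff₀ hZ).2 (gpdf_sub_sub_gpdf_add_le_mul_Z1 hμ ht.le)
  constructor
  · linarith
  · linarith [div_nonneg hdiff_nonneg hZ.le]
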